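/- arXiv:2504.17459 — 7 statements merged into one kernel-verified Lean document; each statement's English description precedes it below -/
import Mathlib

section
/- Let H and G be groups, let N be a normal subgroup of H, and let E, f : H → G be group homomorphisms such that f(n) = E(n) for every n ∈ N. Assume that the set E(N) = {E(n) : n ∈ N} generates G. Then there exists a group homomorphism ψ : H → G whose image is contained in the center Z(G) of G, such that N ⊆ ker ψ and f(h) = ψ(h)·E(h) for every h ∈ H. -/
/-- Let `H` and `G` be groups, `N` a normal subgroup of `H`, and
`E f : H → G` group homomorphisms agreeing on `N`. If `E '' N` generates `G`, then
there is a group homomorphism `ψ : H → G` with values in the center of `G`,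
vanishing on `N`, such that `f h = ψ h * E h` for all `h`. -/
theorem rangeDecreasing_representation_abstract {H G : Type*} [Group H] [Group G]
    (N : Subgroup H) [N.Normal] (E f : H →* G)
    (hEf : ∀ n ∈ N, f n = E n)
    (hgen : Subgroup.closure (E '' (N : Set H)) = ⊤) :
    ∃ ψ : H →* G, (∀ h : H, ψ h ∈ Subgroup.center G) ∧ (∀ n ∈ N, ψ n = 1) ∧
      ∀ h : H, f h = ψ h * E h := by
  have inst : N.Normal := ‹_›
  -- the candidate function
  set c : H → G := fun h => f h * (E h)⁻¹ with hc
  have hcent : ∀ h : H, c h ∈ Subgroup.center G := by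
    intro h
    rw [Subgroup.mem_center_iff]
    intro g
    have hg : g ∈ Subgroup.closure (E '' (N : Set H)) := by rw [hgen]; trivial
    induction hg using Subgroup.closure_induction with
    | mem x hx =>
      obtain ⟨n, hn, rfl⟩ := hx
      have hmem : h⁻¹ * n * h ∈ N := by
        have := inst.conj_mem n hn h⁻¹
        rwa [inv_inv] at this
      have key : (f h)⁻¹ * E n * f h = (E h)⁻¹ * E n * E h := by
        have h1 := hEf _ hmem
        simp only [map_mul, map_inv, hEf n hn] at h1
        exact h1
      have key2 : E n * f h = f h * ((E h)⁻¹ * E n * E h) := by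
        rw [← key]; group
      calc E n * c h = E n * f h * (E h)⁻¹ := by rw [hc]; group
        _ = f h * ((E h)⁻¹ * E n * E h) * (E h)⁻¹ := by rw [key2]
        _ = c h * E n := by rw [hc]; group
    | one => simp
    | mul x y _ _ hx hy => rw [mul_assoc, hy, ← mul_assoc, hx, mul_assoc]
    | inv x _ hx =>
      have := hx
      calc x⁻¹ * c h = x⁻¹ * (c h * x) * x⁻¹ := by group
        _ = x⁻¹ * (x * c h) * x⁻¹ := by rw [← this]
        _ = c h * x⁻¹ := by group
  have hmul : ∀ a b : H, c (a * b) = c a * c b := by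
    intro a b
    have hb := (Subgroup.mem_center_iff.mp (hcent b)) ((E a)⁻¹)
    calc c (a * b) = f a * (f b * (E b)⁻¹ * (E a)⁻¹) := by
          simp only [hc, map_mul, mul_inv_rev]; group
      _ = f a * (c b * (E a)⁻¹) := by rw [hc]
      _ = f a * ((E a)⁻¹ * c b) := by rw [← hb]
      _ = c a * c b := by rw [hc]; group
  refine ⟨{ toFun := c, map_one' := by simp [hc], map_mul' := hmul }, hcent, ?_, ?_⟩
  · intro n hn
    simp [hc, hEf n hn]
  · intro h
    simp [hc]
end

section
/- Let V be a nonempty locally compact Hausdorff topological space, let v₀ ∈ V, and let G be a path-connected topological group. Let H_c denote the subgroup of C(V,G) consisting of those x that are equal to 1 outside some compact subset of V, and let N_c denote the set of x ∈ H_c for which there exist a compact set K ⊆ V with x = 1 on V∖K and a homotopy H : [0,1] × V → G with H(0,·) ≡ 1, H(1,·) = x, and H(t,v) = 1 for all t ∈ [0,1] and all v ∈ V∖K. If f : H_c → G is a group homomorphism such that f(x) = x(v₀) for every x ∈ N_c, then there exists a group homomorphism ψ : H_c → G with values in the center Z(G) of G such that ψ(x) = 1 for every x ∈ N_c and f(x)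 = ψ(x)·x(v₀) for every x ∈ H_c. -/
open ContinuousMap

/-- The subgroup of `C(V,G)` of maps equal to `1` outside some compact subset of `V`. -/
def compactlySupportedSubgroup (V G : Type*) [TopologicalSpace V] [TopologicalSpace G]
    [Group G] [IsTopologicalGroup G] : Subgroup C(V, G) where
  carrier := {x : C(V, G) | ∃ K : Set V, IsCompact K ∧ ∀ v ∉ K, x v = 1}
  one_mem' := ⟨∅, isCompact_empty, fun _ _ => rfl⟩
  mul_mem' := by
    rintro x y ⟨K, hK, hx⟩ ⟨L, hL, hy⟩
    exact ⟨K ∪ L, hK.union hL, fun v hv => by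
      simp [hx v (fun h => hv (Or.inl h)), hy v (fun h => hv (Or.inr h))]⟩
  inv_mem' := by
    rintro x ⟨K, hK, hx⟩
    exact ⟨K, hK, fun v hv => by simp [hx v hv]⟩

/-- The set of compactly supported maps that are null-homotopic through a homotopy that is
constantly `1` outside a compact set containing the support. -/
def compactlyNullHomotopic {V G : Type*} [TopologicalSpace V] [TopologicalSpace G]
    [Group G] [IsTopologicalGroup G] (x : C(V, G)) : Prop :=
  ∃ K : Set V, IsCompact K ∧ (∀ v ∉ K, x v = 1) ∧
    ContinuousMap.HomotopicRel (1 : C(V, G)) x Kᶜ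

/- Setting `ψ x = f x * (x v₀)⁻¹`, the only point is that `ψ x` is central. For any `g : G`, a
Urysohn function concentrated near `v₀` composed with a path from `1` to `g` gives `n ∈ N_c` with
`n v₀ = g`; since `N_c` is conjugation invariant, `f` agrees with evaluation at `v₀` on `x n x⁻¹`,
so conjugation by `f x` and by `x v₀` agree on every `g`. -/

section Algebra

variable {H G : Type*} [Group H] [Group G] (f e : H →* G)

lemma mul_inv_mem_center_of_conj_eq {x : H}
    (hx : ∀ g, f x * g * (f x)⁻¹ = e x * g * (e x)⁻¹) : f x * (e x)⁻¹ ∈ Subgroup.center G := by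
  refine Subgroup.mem_center_iff.mpr fun g => ?_
  calc g * (f x * (e x)⁻¹)
      = f x * ((e x)⁻¹ * g * e x) * (f x)⁻¹ * (f x * (e x)⁻¹) := by rw [hx]; group
    _ = f x * (e x)⁻¹ * g := by group

lemma mul_inv_map_mul_of_mem_center (hc : ∀ x, f x * (e x)⁻¹ ∈ Subgroup.center G) (x y : H) :
    f (x * y) * (e (x * y))⁻¹ = f x * (e x)⁻¹ * (f y * (e y)⁻¹) :=
  calc f (x * y) * (e (x * y))⁻¹ = f x * ((f y * (e y)⁻¹) * (e x)⁻¹) := by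
        simp only [map_mul, mul_inv_rev, mul_assoc]
    _ = f x * ((e x)⁻¹ * (f y * (e y)⁻¹)) := by
        rw [← Subgroup.mem_center_iff.mp (hc y)]
    _ = f x * (e x)⁻¹ * (f y * (e y)⁻¹) := by group

theorem MonoidHom.exists_central_mul_eq_of_eqOn_conj_invariant (N : Set H)
    (hN : ∀ x, ∀ n ∈ N, x * n * x⁻¹ ∈ N) (hfe : ∀ n ∈ N, f n = e n)
    (he : ∀ g, ∃ n ∈ N, e n = g) :
    ∃ ψ : H →* G, (∀ x, ψ x ∈ Subgroup.center G) ∧ (∀ x ∈ N, ψ x = 1) ∧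
      ∀ x, f x = ψ x * e x := by
  have hconj : ∀ x g, f x * g * (f x)⁻¹ = e x * g * (e x)⁻¹ := by
    intro x g
    obtain ⟨n, hn, rfl⟩ := he g
    simpa [hfe n hn] using hfe _ (hN x n hn)
  have hc x := mul_inv_mem_center_of_conj_eq f e (hconj x)
  refine ⟨MonoidHom.mk' (fun x => f x * (e x)⁻¹) (mul_inv_map_mul_of_mem_center f e hc), hc,
    fun x hx => ?_, fun x => ?_⟩
  · simp [hfe x hx]
  · simp

end Algebra

section Topology

open unitInterval

variable {V G : Type*} [TopologicalSpace V] [TopologicalSpace G] [Group G] [IsTopologicalGroup G]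

lemma compactlyNullHomotopic.mem_compactlySupportedSubgroup {y : C(V, G)}
    (hy : compactlyNullHomotopic y) : y ∈ compactlySupportedSubgroup V G := by
  obtain ⟨K, hK, h1, -⟩ := hy
  exact ⟨K, hK, h1⟩

lemma compactlyNullHomotopic.conj {y : C(V, G)} (hy : compactlyNullHomotopic y) (x : C(V, G)) :
    compactlyNullHomotopic (x * y * x⁻¹) := by
  obtain ⟨K, hK, hy1, ⟨F⟩⟩ := hy
  refine ⟨K, hK, fun v hv => by simp [hy1 v hv], ⟨?_⟩⟩
  refine ⟨⟨⟨fun q => x q.2 * F q * (x q.2)⁻¹, by fun_prop⟩, fun v => by simp, fun v => by simp⟩,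
    fun t v hv => ?_⟩
  simp [F.eq_fst t hv]

lemma compactlyNullHomotopic_path_comp {g : G} (p : Path 1 g) (φ : C(V, I)) {K : Set V}
    (hK : IsCompact K) (hφ : ∀ v ∉ K, φ v = 0) :
    compactlyNullHomotopic ((p : C(I, G)).comp φ) := by
  refine ⟨K, hK, fun v hv => by simp [hφ v hv], ⟨?_⟩⟩
  refine ⟨⟨⟨fun q => p (q.1 * φ q.2), by fun_prop⟩, fun v => by simp, fun v => by simp⟩,
    fun t v hv => ?_⟩
  simp [hφ v hv]

lemma exists_compactlyNullHomotopic_apply_eq [RegularSpace V] [LocallyCompactSpace V]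
    [PathConnectedSpace G] (v₀ : V) (g : G) :
    ∃ y : C(V, G), compactlyNullHomotopic y ∧ y v₀ = g := by
  obtain ⟨φ, hφv₀, -, hφc, hφI⟩ := exists_continuous_one_zero_of_isCompact
    (isCompact_singleton (x := v₀)) isClosed_empty (Set.disjoint_empty _)
  let φI : C(V, I) := ⟨fun v => ⟨φ v, hφI v⟩, by fun_prop⟩
  have hφI_zero v (hv : v ∉ tsupport φ) : φI v = 0 :=
    Subtype.ext (image_eq_zero_of_notMem_tsupport (f := φ) hv)
  have hφI_one : φI v₀ = 1 := Subtype.ext (hφv₀ rfl)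
  let p : Path 1 g := (PathConnectedSpace.joined 1 g).somePath
  exact ⟨_, compactlyNullHomotopic_path_comp p φI hφc hφI_zero, by simp [hφI_one]⟩

end Topology

theorem rangeDecreasing_representation_compactSupport_general {V G : Type*} [TopologicalSpace V]
    [LocallyCompactSpace V] [T2Space V]
    [TopologicalSpace G] [Group G] [IsTopologicalGroup G] [PathConnectedSpace G]
    (v₀ : V) (f : (compactlySupportedSubgroup V G) →* G)
    (hf : ∀ x : compactlySupportedSubgroup V G,
      compactlyNullHomotopic (x : C(V, G)) → f x = (x : C(V, G)) v₀) :
    ∃ ψ : (compactlySupportedSubgroup V G) →* G,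
      (∀ x : compactlySupportedSubgroup V G, ψ x ∈ Subgroup.center G) ∧
      (∀ x : compactlySupportedSubgroup V G,
        compactlyNullHomotopic (x : C(V, G)) → ψ x = 1) ∧
      ∀ x : compactlySupportedSubgroup V G, f x = ψ x * (x : C(V, G)) v₀ := by
  let ev : compactlySupportedSubgroup V G →* G :=
    MonoidHom.mk' (fun x => (x : C(V, G)) v₀) fun _ _ => rfl
  refine f.exists_central_mul_eq_of_eqOn_conj_invariant ev
    {x | compactlyNullHomotopic (x : C(V, G))} (fun x n hn => ?_) hf fun g => ?_
  · simpa using hn.conj (x : C(V, G))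
  · obtain ⟨y, hy, hyv₀⟩ := exists_compactlyNullHomotopic_apply_eq v₀ g
    exact ⟨⟨y, hy.mem_compactlySupportedSubgroup⟩, hy, hyv₀⟩

/-- Let `V` be a nonempty locally compact Hausdorff space, `v₀ ∈ V`, `G` a
path-connected topological group, `H_c` the subgroup of compactly supported maps and `N_c` the
compactly null-homotopic ones.  If `f : H_c → G` is a group homomorphism with `f x = x v₀`
on `N_c`, then there is a central-valued group homomorphism `ψ : H_c → G`, trivial on `N_c`,
with `f x = ψ x * x v₀`. -/
theorem rangeDecreasing_representation_compactSupport {V G : Type*} [TopologicalSpace V]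
    [Nonempty V] [LocallyCompactSpace V] [T2Space V]
    [TopologicalSpace G] [Group G] [IsTopologicalGroup G] [PathConnectedSpace G]
    (v₀ : V) (f : (compactlySupportedSubgroup V G) →* G)
    (hf : ∀ x : compactlySupportedSubgroup V G,
      compactlyNullHomotopic (x : C(V, G)) → f x = (x : C(V, G)) v₀) :
    ∃ ψ : (compactlySupportedSubgroup V G) →* G,
      (∀ x : compactlySupportedSubgroup V G, ψ x ∈ Subgroup.center G) ∧
      (∀ x : compactlySupportedSubgroup V G,
        compactlyNullHomotopic (x : C(V, G)) → ψ x = 1) ∧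
      ∀ x : compactlySupportedSubgroup V G, f x = ψ x * (x : C(V, G)) v₀ :=
  rangeDecreasing_representation_compactSupport_general v₀ f hf
end

section
/- Let V be a nonempty topological space and let G be a nontrivial path-connected topological group. For a map f : C(V,G) → G the following are equivalent. (a) f is a group homomorphism and there exists v₀ ∈ V such that f(x) = x(v₀) for every x ∈ C(V,G) whose coset [x] modulo the null-homotopic maps contains at least one non-surjective map. (b) There exist v₀ ∈ V and a group homomorphism ψ : C(V,G) → G with values in the center Z(G) of G such that ψ(x) = ψ(y) whenever x and y are homotopic, ψ(x) = 1 for every x whose coset [x] contains a non-surjective map, and f(x) = ψ(x)·x(v₀) for every x ∈ C(V,G). -/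
/-!
Write `φ x = f x * (x v₀)⁻¹`. If `f` is a homomorphism agreeing with evaluation at `v₀` on the
maps whose coset contains a non-surjective map, then it does so on null-homotopic maps and on
constant maps (both non-surjective, as `G` is nontrivial). The first makes `φ` homotopy invariant.
Since `G` is path connected, conjugating `x` by a constant `g` does not change its homotopy class,
while it conjugates `φ x` by `g`; so `φ` is central-valued, hence a homomorphism, and `ψ := φ`
works. Conversely `x ↦ ψ x * x v₀` is a homomorphism because `ψ` is central-valued.
-/

open ContinuousMap

namespace MonoidHom

variable {M G : Type*} [MulOneClass M] [Group G]

theorem mul_apply_mul_of_mem_center (ψ E : M →* G) (hψ : ∀ a, ψ a ∈ Subgroup.center G)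
    (a b : M) : ψ (a * b) * E (a * b) = ψ a * E a * (ψ b * E b) := by
  have hcomm := Subgroup.mem_center_iff.mp (hψ b) (E a)
  calc ψ (a * b) * E (a * b) = ψ a * (ψ b * E a) * E b := by simp only [map_mul]; group
    _ = ψ a * E a * (ψ b * E b) := by rw [← hcomm]; group

def mulInvOfMemCenter (F E : M →* G) (h : ∀ a, F a * (E a)⁻¹ ∈ Subgroup.center G) : M →* G :=
  mk' (fun a => F a * (E a)⁻¹) fun a b => by
    have hcomm := Subgroup.mem_center_iff.mp (h b) (E a)⁻¹
    calc F (a * b) * (E (a * b))⁻¹ = F a * (F b * (E b)⁻¹ * (E a)⁻¹) := by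
          simp only [map_mul, mul_inv_rev]; group
      _ = F a * (E a)⁻¹ * (F b * (E b)⁻¹) := by rw [← hcomm]; group

@[simp]
theorem mulInvOfMemCenter_apply (F E : M →* G) (h : ∀ a, F a * (E a)⁻¹ ∈ Subgroup.center G)
    (a : M) : mulInvOfMemCenter F E h a = F a * (E a)⁻¹ :=
  rfl

theorem mul_inv_apply_conj {M : Type*} [Group M] (F E : M →* G) {a : M} (ha : F a = E a)
    (x : M) : F (a * x * a⁻¹) * (E (a * x * a⁻¹))⁻¹ = F a * (F x * (E x)⁻¹) * (F a)⁻¹ := by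
  simp only [map_mul, map_inv, ha]
  group

end MonoidHom

namespace ContinuousMap

section

variable {V G : Type*} [TopologicalSpace V] [TopologicalSpace G]

theorem Homotopic.mul [Mul G] [ContinuousMul G] {x₁ x₂ y₁ y₂ : C(V, G)}
    (h₁ : x₁.Homotopic y₁) (h₂ : x₂.Homotopic y₂) : (x₁ * x₂).Homotopic (y₁ * y₂) :=
  (Homotopic.refl ⟨fun p : G × G => p.1 * p.2, continuous_mul⟩).comp (h₁.prodMk h₂)

theorem Homotopic.inv [Inv G] [ContinuousInv G] {x y : C(V, G)} (h : x.Homotopic y) :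
    x⁻¹.Homotopic y⁻¹ :=
  (Homotopic.refl ⟨fun g : G => g⁻¹, continuous_inv⟩).comp h

theorem not_surjective_const [Nontrivial G] (g : G) : ¬Function.Surjective ⇑(const V g) :=
  fun h => by
    obtain ⟨g', hg'⟩ := exists_ne g
    obtain ⟨_, hv⟩ := h g'
    exact hg' hv.symm

@[simps]
def evalMonoidHom [MulOneClass G] [ContinuousMul G] (v : V) : C(V, G) →* G where
  toFun x := x v
  map_one' := rfl
  map_mul' _ _ := rfl

variable [Group G] [IsTopologicalGroup G]

theorem Homotopic.inv_mul_homotopic_one {x y : C(V, G)} (h : x.Homotopic y) :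
    (x⁻¹ * y).Homotopic 1 := by
  simpa using ((Homotopic.refl x).inv.mul h).symm

theorem homotopic_const_mul_mul_const_inv [PathConnectedSpace G] (g : G) (x : C(V, G)) :
    (const V g * x * (const V g)⁻¹).Homotopic x := by
  have hg : (const V g).Homotopic 1 := ⟨(PathConnectedSpace.somePath g 1).toHomotopyConst⟩
  simpa using (hg.mul (Homotopic.refl x)).mul hg.inv

end

variable {V G : Type*} [TopologicalSpace V] [TopologicalSpace G] [Group G] [IsTopologicalGroup G]

def CosetMeetsNonsurjective (x : C(V, G)) : Prop :=
  ∃ x₀ : C(V, G), (x₀ * x⁻¹).Homotopic 1 ∧ ¬Function.Surjective ⇑x₀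

theorem cosetMeetsNonsurjective_of_not_surjective {x : C(V, G)}
    (hx : ¬Function.Surjective ⇑x) : CosetMeetsNonsurjective x :=
  ⟨x, by rw [mul_inv_cancel], hx⟩

variable [Nontrivial G]

theorem cosetMeetsNonsurjective_of_homotopic_one {x : C(V, G)} (hx : x.Homotopic 1) :
    CosetMeetsNonsurjective x :=
  ⟨1, by simpa using hx.inv, not_surjective_const 1⟩

section EvalOnCosets

variable {f : C(V, G) →* G} {v₀ : V}
  (hf : ∀ x : C(V, G), CosetMeetsNonsurjective x → f x = x v₀)
include hf

theorem mul_inv_eval_congr {x y : C(V, G)} (h : x.Homotopic y) :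
    f x * (x v₀)⁻¹ = f y * (y v₀)⁻¹ := by
  have hnull := hf _ (cosetMeetsNonsurjective_of_homotopic_one h.inv_mul_homotopic_one)
  calc f x * (x v₀)⁻¹ = f x * (f (x⁻¹ * y) * (y v₀)⁻¹) := by rw [hnull]; simp
    _ = f y * (y v₀)⁻¹ := by rw [map_mul, map_inv]; group

theorem mul_inv_eval_mem_center [PathConnectedSpace G] (x : C(V, G)) :
    f x * (x v₀)⁻¹ ∈ Subgroup.center G := by
  refine Subgroup.mem_center_iff.mpr fun g => ?_
  have hconst : f (const V g) = const V g v₀ :=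
    hf _ (cosetMeetsNonsurjective_of_not_surjective (not_surjective_const g))
  have hconj := MonoidHom.mul_inv_apply_conj f (evalMonoidHom v₀) hconst x
  simp only [evalMonoidHom_apply, hconst, const_apply] at hconj
  rw [mul_inv_eval_congr hf (homotopic_const_mul_mul_const_inv g x)] at hconj
  exact mul_inv_eq_iff_eq_mul.mp hconj.symm

end EvalOnCosets

end ContinuousMap

theorem rangeDecreasing_representation_iff_general {V G : Type*} [TopologicalSpace V]
    [TopologicalSpace G] [Group G] [IsTopologicalGroup G] [PathConnectedSpace G] [Nontrivial G]
    (f : C(V, G) → G) :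
    ((∀ x y : C(V, G), f (x * y) = f x * f y) ∧
      ∃ v₀ : V, ∀ x : C(V, G),
        (∃ x₀ : C(V, G), (x₀ * x⁻¹).Homotopic 1 ∧ ¬Function.Surjective ⇑x₀) → f x = x v₀) ↔
    (∃ (v₀ : V) (ψ : C(V, G) →* G),
      (∀ x : C(V, G), ψ x ∈ Subgroup.center G) ∧
      (∀ x y : C(V, G), x.Homotopic y → ψ x = ψ y) ∧
      (∀ x : C(V, G),
        (∃ x₀ : C(V, G), (x₀ * x⁻¹).Homotopic 1 ∧ ¬Function.Surjective ⇑x₀) → ψ x = 1) ∧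
      ∀ x : C(V, G), f x = ψ x * x v₀) := by
  constructor
  · rintro ⟨hmul, v₀, hf⟩
    let F : C(V, G) →* G := MonoidHom.mk' f hmul
    have hcenter : ∀ x, F x * (evalMonoidHom v₀ x)⁻¹ ∈ Subgroup.center G :=
      mul_inv_eval_mem_center (f := F) hf
    refine ⟨v₀, F.mulInvOfMemCenter (evalMonoidHom v₀) hcenter, hcenter,
      fun x y h => mul_inv_eval_congr hf h, fun x hx => ?_, fun x => ?_⟩
    · rw [MonoidHom.mulInvOfMemCenter_apply, MonoidHom.mk'_apply, hf x hx, evalMonoidHom_apply,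
        mul_inv_cancel]
    · rw [MonoidHom.mulInvOfMemCenter_apply, MonoidHom.mk'_apply, evalMonoidHom_apply,
        inv_mul_cancel_right]
  · rintro ⟨v₀, ψ, hψ, -, hψ_one, hf⟩
    refine ⟨fun x y => ?_, v₀, fun x hx => by rw [hf x, hψ_one x hx, one_mul]⟩
    simpa only [hf, evalMonoidHom_apply] using
      MonoidHom.mul_apply_mul_of_mem_center ψ (evalMonoidHom v₀) hψ x y

/-- For a nonempty space `V`, a nontrivial path-connected topological group `G`
and a map `f : C(V,G) → G`, the following are equivalent: (a) `f` is a group homomorphism and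
there is `v₀ ∈ V` with `f x = x v₀` for every `x` whose coset modulo the null-homotopic maps
contains a non-surjective map; (b) there are `v₀ ∈ V` and a central-valued, homotopy-invariant
group homomorphism `ψ : C(V,G) → G`, trivial on cosets containing a non-surjective map,
such that `f x = ψ x * x v₀` for all `x`. -/
theorem rangeDecreasing_representation_iff {V G : Type*} [TopologicalSpace V] [Nonempty V]
    [TopologicalSpace G] [Group G] [IsTopologicalGroup G] [PathConnectedSpace G] [Nontrivial G]
    (f : C(V, G) → G) :
    ((∀ x y : C(V, G), f (x * y) = f x * f y) ∧
      ∃ v₀ : V, ∀ x : C(V, G),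
        (∃ x₀ : C(V, G), (x₀ * x⁻¹).Homotopic 1 ∧ ¬Function.Surjective ⇑x₀) → f x = x v₀) ↔
    (∃ (v₀ : V) (ψ : C(V, G) →* G),
      (∀ x : C(V, G), ψ x ∈ Subgroup.center G) ∧
      (∀ x y : C(V, G), x.Homotopic y → ψ x = ψ y) ∧
      (∀ x : C(V, G),
        (∃ x₀ : C(V, G), (x₀ * x⁻¹).Homotopic 1 ∧ ¬Function.Surjective ⇑x₀) → ψ x = 1) ∧
      ∀ x : C(V, G), f x = ψ x * x v₀) :=
  rangeDecreasing_representation_iff_general f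
end

section
/- Let V be a topological space, let G be a topological group, and let h : C(V,G) → G be a group homomorphism such that h(c_g) = g for every g ∈ G, where c_g denotes the constant map with value g, and such that h(x) ≠ 1 for every x ∈ C(V,G) with x(v) ≠ 1 for all v ∈ V. Then h is range decreasing, i.e. h(x) ∈ x(V) for every x ∈ C(V,G). -/
open ContinuousMap

/-- If `h : C(V,G) → G` is a group homomorphism fixing the constant maps
(`h c_g = g`) and such that `h x ≠ 1` whenever `x` omits the value `1`, then `h` is range
decreasing: `h x ∈ x(V)` for every `x`. -/
theorem rangeDecreasing_of_fixes_constants {V G : Type*} [TopologicalSpace V]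
    [TopologicalSpace G] [Group G] [IsTopologicalGroup G]
    (h : C(V, G) →* G)
    (hconst : ∀ g : G, h (ContinuousMap.const V g) = g)
    (hne : ∀ x : C(V, G), (∀ v : V, x v ≠ 1) → h x ≠ 1) :
    ∀ x : C(V, G), h x ∈ Set.range ⇑x := by
  intro x
  by_contra hx
  set y := x * const V (h x)⁻¹
  have hy_omits_one : ∀ v, y v ≠ 1 := fun v hv =>
    hx ⟨v, mul_inv_eq_one.mp hv⟩
  have hy : h y = 1 := by rw [map_mul, hconst, mul_inv_cancel]
  exact hne y hy_omits_one hy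
end

section
/- Let n ≥ 2 be an integer. The quotient group C(𝕋ⁿ,𝕋ⁿ)/N of the group of continuous maps 𝕋ⁿ → 𝕋ⁿ by the normal subgroup N of null-homotopic maps is generated by the set of cosets {[x₀] : x₀ ∈ C(𝕋ⁿ,𝕋ⁿ), x₀ is not surjective}. -/
open ContinuousMap

section NullHomotopic

variable {V G : Type*} [TopologicalSpace V] [TopologicalSpace G] [Group G] [IsTopologicalGroup G]

theorem ContinuousMap.Homotopic.mul' {x x' y y' : C(V, G)} (hx : x.Homotopic x')
    (hy : y.Homotopic y') : (x * y).Homotopic (x' * y') := by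
  obtain ⟨F⟩ := hx
  obtain ⟨K⟩ := hy
  exact ⟨{ toFun := fun p => F p * K p
           continuous_toFun := F.continuous.mul K.continuous
           map_zero_left := fun v => by simp
           map_one_left := fun v => by simp }⟩

theorem ContinuousMap.Homotopic.inv' {x x' : C(V, G)} (hx : x.Homotopic x') :
    x⁻¹.Homotopic x'⁻¹ := by
  obtain ⟨F⟩ := hx
  exact ⟨{ toFun := fun p => (F p)⁻¹
           continuous_toFun := F.continuous.inv
           map_zero_left := fun v => by simp
           map_one_left := fun v => by simp }⟩

/-- The normal subgroup of null-homotopic maps in `C(V,G)`. -/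
def nullHomotopicSubgroup (V G : Type*) [TopologicalSpace V] [TopologicalSpace G] [Group G]
    [IsTopologicalGroup G] : Subgroup C(V, G) where
  carrier := {x : C(V, G) | x.Homotopic 1}
  one_mem' := ContinuousMap.Homotopic.refl 1
  mul_mem' := fun hx hy => by simpa using hx.mul' hy
  inv_mem' := fun hx => by simpa using hx.inv'

instance nullHomotopicSubgroup_normal : (nullHomotopicSubgroup V G).Normal := by
  constructor
  intro y hy x
  have h2 : (x * y * x⁻¹).Homotopic (x * 1 * x⁻¹) :=
    ((ContinuousMap.Homotopic.refl x).mul' hy).mul' (ContinuousMap.Homotopic.refl x⁻¹)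
  exact (by simpa using h2 : (x * y * x⁻¹).Homotopic 1)

end NullHomotopic

/-! A map `x : V → Gⁿ` is the product of the maps `v ↦ (1, …, x v i, …, 1)`, and when `n ≥ 2`
each of these misses every point with a coordinate `≠ 1` outside position `i`. So already in
`C(V, Gⁿ)` the non-surjective maps generate everything, and homotopy plays no role. -/

namespace ContinuousMap

variable {V ι G : Type*} [TopologicalSpace V] [TopologicalSpace G] [DecidableEq ι]

def piMulSingle [One G] (x : C(V, ι → G)) (i : ι) : C(V, ι → G) where
  toFun v := Pi.mulSingle i (x v i)
  continuous_toFun := continuous_mulSingle i |>.comp ((continuous_apply i).comp x.continuous)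

theorem prod_piMulSingle [Fintype ι] [CommMonoid G] [ContinuousMul G] (x : C(V, ι → G)) :
    ∏ i, x.piMulSingle i = x := by
  ext v : 1
  simp only [prod_apply]
  exact Finset.univ_prod_mulSingle (x v)

theorem not_surjective_piMulSingle [One G] [Nontrivial ι] [Nontrivial G] (x : C(V, ι → G))
    (i : ι) : ¬Function.Surjective (x.piMulSingle i) := by
  obtain ⟨j, hji⟩ := exists_ne i
  obtain ⟨c, hc⟩ := exists_ne (1 : G)
  intro hsurj
  obtain ⟨v, hv⟩ := hsurj (fun _ => c)
  exact hc (by simpa [piMulSingle, hji] using (congrFun hv j).symm)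

end ContinuousMap

theorem ContinuousMap.closure_setOf_not_surjective {V ι G : Type*} [TopologicalSpace V]
    [TopologicalSpace G] [CommGroup G] [IsTopologicalGroup G] [Finite ι] [Nontrivial ι]
    [Nontrivial G] : Subgroup.closure {x : C(V, ι → G) | ¬Function.Surjective x} = ⊤ := by
  classical
  have := Fintype.ofFinite ι
  refine eq_top_iff.mpr fun x _ => ?_
  rw [← prod_piMulSingle x]
  exact Subgroup.prod_mem _ fun i _ =>
    Subgroup.subset_closure (x.not_surjective_piMulSingle i)

instance : Nontrivial Circle := ⟨⟨_, _, Circle.exp_pi_ne_one⟩⟩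

/-- For `n ≥ 2`, the quotient of `C(𝕋ⁿ,𝕋ⁿ)` by the normal subgroup of
null-homotopic maps is generated by the cosets of the non-surjective maps. -/
theorem torus_quotient_generated_by_nonsurjective {n : ℕ} (hn : 2 ≤ n) :
    Subgroup.closure
      ((fun x₀ : C(Fin n → Circle, Fin n → Circle) =>
          (QuotientGroup.mk x₀ :
            C(Fin n → Circle, Fin n → Circle) ⧸ nullHomotopicSubgroup _ _)) ''
        {x₀ : C(Fin n → Circle, Fin n → Circle) | ¬Function.Surjective ⇑x₀}) = ⊤ := by
  have : Nontrivial (Fin n) := Fin.nontrivial_iff_two_le.mpr hn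
  let π := QuotientGroup.mk' (nullHomotopicSubgroup (Fin n → Circle) (Fin n → Circle))
  have h := congrArg (Subgroup.map π) ContinuousMap.closure_setOf_not_surjective
  rwa [MonoidHom.map_closure, Subgroup.map_top_of_surjective π
    (QuotientGroup.mk'_surjective _)] at h
end

section
/- Let n ≥ 2 be an integer and let f : C(𝕋ⁿ,𝕋ⁿ) → 𝕋ⁿ be a range decreasing group homomorphism, i.e. a group homomorphism with f(x) ∈ x(𝕋ⁿ) for every continuous map x : 𝕋ⁿ → 𝕋ⁿ. Then there exists a point b ∈ 𝕋ⁿ such that f(x) = x(b) for every x ∈ C(𝕋ⁿ,𝕋ⁿ). -/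
/-!
Since `f` is range decreasing, the `j`-th coordinate of `f x` is `1` whenever that of `x` is, so,
`f` being a homomorphism, it depends only on the `j`-th coordinate of `x`; testing on diagonal
maps shows it is `g (xⱼ)` for one homomorphism `g : C(𝕋ⁿ, 𝕋) →* 𝕋`. Range decreasing now says
that for any maps `u₁, …, uₙ : 𝕋ⁿ → 𝕋` the values `g uⱼ` are attained by the `uⱼ` at a common
point. Let `bₖ = g (prₖ)`. Putting `z ∘ prₖ` and `prₖ` in two different slots gives `g (z ∘ prₖ) = z bₖ`.
For arbitrary `x`, let `y w = x (b with its k-th coordinate replaced by wₖ)`; pairing `x * y⁻¹`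
with the projections `prⱼ`, `j ≠ k`, gives a common point `v` agreeing with `b` off `k`, where
`x * y⁻¹` equals `1`, so `g x = g y = x b`.
-/

open ContinuousMap

def IsRangeDecreasing {V X : Type*} [TopologicalSpace V] [TopologicalSpace X]
    (f : C(V, X) → X) : Prop :=
  ∀ x : C(V, X), f x ∈ Set.range x

section Decomposition

variable {V G ι : Type*} [TopologicalSpace V] [TopologicalSpace G] [Group G]
  [IsTopologicalGroup G] {f : C(V, ι → G) →* (ι → G)}

theorem IsRangeDecreasing.apply_eq_one (hf : IsRangeDecreasing f) {x : C(V, ι → G)} {j : ι}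
    (hx : ∀ v, x v j = 1) : f x j = 1 := by
  obtain ⟨v, hv⟩ := hf x
  rw [← hv, hx]

theorem IsRangeDecreasing.apply_congr (hf : IsRangeDecreasing f) {x y : C(V, ι → G)} {j : ι}
    (hxy : (eval j).comp x = (eval j).comp y) : f x j = f y j := by
  have hquot : f (y⁻¹ * x) j = 1 := hf.apply_eq_one fun v => by
    simpa [inv_mul_eq_one] using (DFunLike.congr_fun hxy v).symm
  rw [map_mul, map_inv, Pi.mul_apply, Pi.inv_apply, inv_mul_eq_one] at hquot
  exact hquot.symm

def diagonalHom (V G ι : Type*) [TopologicalSpace V] [TopologicalSpace G] [Group G]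
    [IsTopologicalGroup G] : C(V, G) →* C(V, ι → G) :=
  (Pi.constMonoidHom ι G).compLeftContinuous V (continuous_pi fun _ => continuous_id)

theorem IsRangeDecreasing.apply_diagonalHom_eq (hf : IsRangeDecreasing f) (z : C(V, G)) (i j : ι) :
    f (diagonalHom V G ι z) i = f (diagonalHom V G ι z) j := by
  obtain ⟨v, hv⟩ := hf (diagonalHom V G ι z)
  rw [← hv]
  rfl

theorem IsRangeDecreasing.exists_monoidHom_apply_eq [Nonempty ι] (hf : IsRangeDecreasing f) :
    ∃ g : C(V, G) →* G, ∀ x j, f x j = g ((eval j).comp x) := by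
  let j₀ : ι := Classical.arbitrary ι
  refine ⟨(Pi.evalMonoidHom _ j₀).comp (f.comp (diagonalHom V G ι)), fun x j => ?_⟩
  calc f x j = f (diagonalHom V G ι ((eval j).comp x)) j := hf.apply_congr rfl
    _ = f (diagonalHom V G ι ((eval j).comp x)) j₀ := hf.apply_diagonalHom_eq _ j j₀

theorem IsRangeDecreasing.exists_forall_apply_eq {g : C(V, G) →* G}
    (hg : IsRangeDecreasing fun x : C(V, ι → G) => fun j => g ((eval j).comp x))
    (u : ι → C(V, G)) : ∃ v, ∀ j, g (u j) = u j v := by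
  obtain ⟨v, hv⟩ := hg (pi u)
  exact ⟨v, fun j => (congrFun hv j).symm⟩

end Decomposition

section Evaluation

variable {G ι : Type*} [TopologicalSpace G] [Group G] [IsTopologicalGroup G] [Nontrivial ι]
  {g : C(ι → G, G) →* G}

theorem IsRangeDecreasing.apply_comp_eval
    (hg : IsRangeDecreasing fun x : C(ι → G, ι → G) => fun j => g ((eval j).comp x))
    (z : C(G, G)) (k : ι) : g (z.comp (eval k)) = z (g (eval k)) := by
  classical
  obtain ⟨k', hk'⟩ := exists_ne k
  obtain ⟨v, hv⟩ := hg.exists_forall_apply_eq (Function.update eval k' (z.comp (eval k)))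
  have hk := hv k
  have hk'' := hv k'
  rw [Function.update_of_ne hk'.symm] at hk
  rw [Function.update_self] at hk''
  rw [hk'', hk]
  rfl

theorem IsRangeDecreasing.apply_eq_apply_eval
    (hg : IsRangeDecreasing fun x : C(ι → G, ι → G) => fun j => g ((eval j).comp x))
    (x : C(ι → G, G)) : g x = x fun k => g (eval k) := by
  classical
  set b : ι → G := fun k => g (eval k)
  obtain ⟨k⟩ : Nonempty ι := inferInstance
  let y : C(ι → G, G) := (x.comp ⟨Function.update b k, by fun_prop⟩).comp (eval k)
  have hgy : g y = x b := by
    rw [hg.apply_comp_eval]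
    simp [b]
  obtain ⟨v, hv⟩ := hg.exists_forall_apply_eq (Function.update eval k (x * y⁻¹))
  have hvb : Function.update b k (v k) = v := by
    funext j
    rcases eq_or_ne j k with rfl | hjk
    · simp
    · simpa [hjk] using hv j
  have hk := hv k
  rw [Function.update_self, map_mul, map_inv, hgy] at hk
  rw [← mul_inv_eq_one, hk]
  simp [y, hvb]

end Evaluation

/-- For `n ≥ 2`, every range decreasing group homomorphism
`f : C(𝕋ⁿ,𝕋ⁿ) → 𝕋ⁿ` is an evaluation map: there is `b ∈ 𝕋ⁿ` with `f x = x b` for all `x`. -/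
theorem torus_rangeDecreasing_is_evaluation {n : ℕ} (hn : 2 ≤ n)
    (f : C(Fin n → Circle, Fin n → Circle) →* (Fin n → Circle))
    (hf : ∀ x : C(Fin n → Circle, Fin n → Circle), f x ∈ Set.range ⇑x) :
    ∃ b : Fin n → Circle, ∀ x : C(Fin n → Circle, Fin n → Circle), f x = x b := by
  have : Nontrivial (Fin n) := Fin.nontrivial_iff_two_le.mpr hn
  obtain ⟨g, hfg⟩ := IsRangeDecreasing.exists_monoidHom_apply_eq hf
  have hg : IsRangeDecreasing fun x : C(Fin n → Circle, Fin n → Circle) =>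
      fun j => g ((eval j).comp x) := fun x => by
    simpa only [← funext (hfg x)] using hf x
  refine ⟨fun k => g (eval k), fun x => funext fun j => ?_⟩
  rw [hfg, hg.apply_eq_apply_eval]
  rfl
end

section
/- Let S¹ = {z ∈ ℂ : |z| = 1} be the circle group and suppose d : C(S¹,S¹) → ℤ is a function such that every continuous map x : S¹ → S¹ is homotopic to the map z ↦ z^{d(x)}. Fix points b, z₀ ∈ S¹. Then the map f_{b,z₀} : C(S¹,S¹) → S¹ defined by f_{b,z₀}(x) = z₀^{d(x)}·x(b) is a group homomorphism, and it is range decreasing: f_{b,z₀}(x) ∈ x(S¹) for every x ∈ C(S¹,S¹). -/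
open ContinuousMap

/-- The continuous map `S¹ → S¹`, `z ↦ z^k`. -/
noncomputable def circlePowMap (k : ℤ) : C(Circle, Circle) :=
  ⟨fun z => z ^ k, continuous_id.zpow k⟩

/-!
Lifting `t ↦ x (exp (2πt))` through the covering `Circle.exp : ℝ → Circle` measures the winding
of `x`, which is `2π` times its degree. The winding is additive under pointwise multiplication
(add the lifts), invariant under homotopy (lift the homotopy), equal to `2πk` for `z ↦ z ^ k`,
and zero when `x` misses a point `p`, since then `arg`, with its cut rotated to `p`, is a global
lift. Hence `d` is additive, which makes `f_{b,z₀}` a homomorphism, and `d x = 0` unless `x` is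
surjective, in which case `f_{b,z₀} x = x b`.
-/

open scoped Real
open Complex (arg mem_slitPlane_iff_arg continuousAt_arg)
open Set unitInterval Circle

noncomputable section

namespace CircleMap

theorem continuousAt_arg_coe {z : Circle} (hz : z ≠ exp π) :
    ContinuousAt (fun w : Circle => arg w) z := by
  have hz' : arg z ≠ π := fun h =>
    hz (injective_arg (h.trans (arg_exp (by linarith [Real.pi_pos]) le_rfl).symm))
  exact (continuousAt_arg (mem_slitPlane_iff_arg.2 ⟨hz', z.coe_ne_zero⟩)).comp
    continuous_subtype_val.continuousAt

/-- The increment `Γ 1 - Γ 0` of a lift `Γ` of `γ` through `Circle.exp`; by `liftIncrement_eq`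
it does not depend on the lift. -/
def liftIncrement (γ : C(I, Circle)) : ℝ :=
  let Γ := isCoveringMap_exp.liftPath γ (arg (γ 0)) (exp_arg _).symm
  Γ 1 - Γ 0

theorem liftIncrement_eq {γ : C(I, Circle)} {Γ : I → ℝ} (hΓ : Continuous Γ)
    (hlift : ∀ t, exp (Γ t) = γ t) : liftIncrement γ = Γ 1 - Γ 0 := by
  set L := isCoveringMap_exp.liftPath γ (arg (γ 0)) (exp_arg _).symm
  have hL : ∀ t, exp (L t) = γ t := congrFun (isCoveringMap_exp.liftPath_lifts γ _ _)
  have hconst := isCoveringMap_exp.const_of_comp (L.continuous.sub hΓ)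
    (fun t t' => by simp only [Pi.sub_apply, exp_sub, hL, hlift, div_self']) 0 1
  simp only [Pi.sub_apply] at hconst
  change L 1 - L 0 = _
  linarith

theorem liftIncrement_mul (γ δ : C(I, Circle)) :
    liftIncrement (γ * δ) = liftIncrement γ + liftIncrement δ := by
  set Γ := isCoveringMap_exp.liftPath γ (arg (γ 0)) (exp_arg _).symm
  set Δ := isCoveringMap_exp.liftPath δ (arg (δ 0)) (exp_arg _).symm
  have hΓ : ∀ t, exp (Γ t) = γ t := congrFun (isCoveringMap_exp.liftPath_lifts γ _ _)
  have hΔ : ∀ t, exp (Δ t) = δ t := congrFun (isCoveringMap_exp.liftPath_lifts δ _ _)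
  rw [liftIncrement_eq (Γ.continuous.add Δ.continuous) (fun t => by simp [exp_add, hΓ, hΔ])]
  simp only [liftIncrement, Pi.add_apply]
  ring

theorem liftIncrement_eq_zero {γ : C(I, Circle)} (hγ : γ 0 = γ 1) {p : Circle}
    (hp : p ∉ range γ) : liftIncrement γ = 0 := by
  -- the rotation by `r` sends `p` to `exp π = -1`, the cut of `arg`
  set r := exp π * p⁻¹
  have hne : ∀ t, γ t * r ≠ exp π := fun t h => hp ⟨t, by
    simpa [r, mul_left_comm _ (exp π), mul_inv_eq_one] using h⟩
  have hcont : Continuous fun t => arg (γ t * r : Circle) - arg (r : Circle) := by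
    refine Continuous.sub (continuous_iff_continuousAt.2 fun t => ?_) continuous_const
    exact (continuousAt_arg_coe (hne t)).comp (f := fun t => γ t * r) (by fun_prop)
  rw [liftIncrement_eq hcont (fun t => by simp only [exp_sub, exp_arg, mul_div_cancel_right]),
    hγ, sub_self]

def stdLoop : C(I, Circle) := exp.comp ⟨fun t => 2 * π * t, by fun_prop⟩

theorem stdLoop_zero_eq_one : stdLoop 0 = stdLoop 1 := by simp [stdLoop]

def winding (x : C(Circle, Circle)) : ℝ := liftIncrement (x.comp stdLoop)

theorem winding_mul (x y : C(Circle, Circle)) : winding (x * y) = winding x + winding y :=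
  liftIncrement_mul (x.comp stdLoop) (y.comp stdLoop)

theorem winding_circlePowMap (k : ℤ) : winding (circlePowMap k) = 2 * π * k := by
  rw [winding, liftIncrement_eq (Γ := fun t => k * (2 * π * t)) (by fun_prop)
    (fun t => by simp [stdLoop, circlePowMap])]
  simp only [Icc.coe_one, Icc.coe_zero]
  ring

theorem winding_eq_zero_of_not_surjective {x : C(Circle, Circle)}
    (hx : ¬ Function.Surjective x) : winding x = 0 := by
  obtain ⟨p, hp⟩ := not_forall.1 hx
  exact liftIncrement_eq_zero (by simp [stdLoop_zero_eq_one]) fun ⟨t, ht⟩ => hp ⟨_, ht⟩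

theorem winding_eq_of_homotopic {x y : C(Circle, Circle)} (h : x.Homotopic y) :
    winding x = winding y := by
  obtain ⟨H⟩ := h
  let F : C(I × I, Circle) := H.toContinuousMap.comp ((ContinuousMap.id I).prodMap stdLoop)
  let Γ₀ := isCoveringMap_exp.liftPath (x.comp stdLoop) _ (exp_arg _).symm
  let Γ := isCoveringMap_exp.liftHomotopy F Γ₀ fun t => by
    simpa [F] using (congrFun (isCoveringMap_exp.liftPath_lifts (x.comp stdLoop) _ _) t).symm
  have hΓ : ∀ s t, exp (Γ (s, t)) = F (s, t) :=
    fun s t => congrFun (isCoveringMap_exp.liftHomotopy_lifts F Γ₀ _) (s, t)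
  have hconst := isCoveringMap_exp.const_of_comp (g := fun s => Γ (s, 1) - Γ (s, 0))
    (by fun_prop) (fun s s' => by simp only [exp_sub, hΓ, F]; simp [stdLoop_zero_eq_one]) 0 1
  rw [winding, winding, liftIncrement_eq (Γ := fun t => Γ (0, t)) (by fun_prop)
    (fun t => by simp [hΓ, F]), liftIncrement_eq (Γ := fun t => Γ (1, t)) (by fun_prop)
    (fun t => by simp [hΓ, F])]
  exact hconst

end CircleMap

end

open CircleMap

/-- Let `d : C(S¹,S¹) → ℤ` be a degree function (every `x` is homotopic to
`z ↦ z^{d x}`). For fixed `b, z₀ ∈ S¹`, the map `f_{b,z₀}(x) = z₀^{d x} * x b` is a range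
decreasing group homomorphism. -/
theorem circle_degree_twisted_evaluation (d : C(Circle, Circle) → ℤ)
    (hd : ∀ x : C(Circle, Circle), x.Homotopic (circlePowMap (d x)))
    (b z₀ : Circle) :
    (∀ x y : C(Circle, Circle),
      z₀ ^ d (x * y) * (x * y) b = (z₀ ^ d x * x b) * (z₀ ^ d y * y b)) ∧
    (∀ x : C(Circle, Circle), z₀ ^ d x * x b ∈ Set.range ⇑x) := by
  have hwinding (x : C(Circle, Circle)) : winding x = 2 * π * d x :=
    (winding_eq_of_homotopic (hd x)).trans (winding_circlePowMap (d x))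
  have hd_mul (x y : C(Circle, Circle)) : d (x * y) = d x + d y := by
    have h := winding_mul x y
    rw [hwinding, hwinding, hwinding, ← mul_add] at h
    exact_mod_cast mul_left_cancel₀ Real.two_pi_pos.ne' h
  refine ⟨fun x y => ?_, fun x => ?_⟩
  · rw [hd_mul, zpow_add, ContinuousMap.mul_apply, mul_mul_mul_comm]
  · by_cases hx : Function.Surjective x
    · exact hx _
    · have h := winding_eq_zero_of_not_surjective hx
      rw [hwinding, mul_eq_zero] at h
      have hdx : d x = 0 := by exact_mod_cast h.resolve_left Real.two_pi_pos.ne'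
      exact ⟨b, by rw [hdx, zpow_zero, one_mul]⟩
end
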